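/- arXiv:math/0501399 — 5 statements merged into one kernel-verified Lean document; each statement's English description precedes it below -/
import Mathlib

section
/- Let A be an Azumaya algebra over a commutative Noetherian ring R, and let I be a right ideal of A such that A/I is a projective R-module. Then there exists an idempotent element e in I such that I = eA. -/
open TensorProduct in
/-- The natural `R`-bilinear map `A → Aᵐᵒᵖ → End_R A`, `a ⊗ bᵒᵖ ↦ (x ↦ a * x * b)`. -/
noncomputable def azumayaMulMap (R A : Type*) [CommRing R] [Ring A] [Algebra R A] :
    A ⊗[R] Aᵐᵒᵖ →ₗ[R] Module.End R A :=
  TensorProduct.lift <| LinearMap.mk₂ R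
    (fun (a : A) (b : Aᵐᵒᵖ) =>
      (LinearMap.mulRight R (MulOpposite.unop b)).comp (LinearMap.mulLeft R a))
    (fun a a' b => by ext x; simp [add_mul])
    (fun c a b => by ext x; simp [smul_mul_assoc])
    (fun a b b' => by ext x; simp [mul_add])
    (fun c a b => by ext x; simp [mul_smul_comm])

/-- `A` is an Azumaya algebra over `R`: finitely generated, projective and faithful
as an `R`-module, and the natural map `A ⊗[R] Aᵐᵒᵖ → End_R A` is bijective. -/
structure IsAzumayaAlgebra (R A : Type*) [CommRing R] [Ring A] [Algebra R A] : Prop where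
  finite : Module.Finite R A
  projective : Module.Projective R A
  faithful : FaithfulSMul R A
  bij : Function.Bijective (azumayaMulMap R A)

/-!
Since `A` is finite, projective and faithful over `R`, some `R`-linear `t : A → R` has
`t 1 = 1`. The preimage `e = ∑ xᵢ ⊗ yᵢ` of the endomorphism `a ↦ t a • 1` under
`A ⊗ Aᵐᵒᵖ ≃ End_R A` is a separability idempotent: `(a ⊗ 1) e = (1 ⊗ a) e` because `t a • 1`
is central, and `∑ xᵢ yᵢ = 1`. Averaging an `R`-linear section `f` of a surjection of right
`A`-modules to `m ↦ ∑ f (m xᵢ) yᵢ` makes it `A`-linear, so right `A`-modules that are projective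
over `R` are projective over `A`. Hence `A → A/I` has a right `A`-linear section `σ`, and
`e = 1 - σ (1 + I)` is an idempotent generating `I`.
-/

open TensorProduct MulOpposite

theorem azumayaMulMap_eq_mulLeftRight (R A : Type*) [CommRing R] [Ring A] [Algebra R A] :
    azumayaMulMap R A = (AlgHom.mulLeftRight R A).toLinearMap :=
  TensorProduct.ext' fun a b => by ext x; simp [azumayaMulMap]

theorem IsAzumayaAlgebra.isAzumaya {R A : Type*} [CommRing R] [Ring A] [Algebra R A]
    (h : IsAzumayaAlgebra R A) : IsAzumaya R A :=
  have := h.finite; have := h.projective; have := h.faithful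
  { bij := by simpa [azumayaMulMap_eq_mulLeftRight] using h.bij }

theorem Module.span_range_dual_apply_eq_top (R M : Type*) [CommRing R] [AddCommGroup M]
    [Module R M] [Module.Finite R M] [Module.Projective R M] [FaithfulSMul R M] :
    Submodule.span R (Set.range fun p : Module.Dual R M × M => p.1 p.2) = ⊤ := by
  set T := Submodule.span R (Set.range fun p : Module.Dual R M × M => p.1 p.2)
  obtain ⟨s, hs⟩ := Module.projective_def.mp ‹Module.Projective R M›
  have hT : (⊤ : Submodule R M) ≤ T • ⊤ := by
    intro m _
    rw [← hs m, Finsupp.linearCombination_apply]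
    refine Submodule.sum_mem _ fun x _ => Submodule.smul_mem_smul ?_ trivial
    exact Submodule.subset_span ⟨(Finsupp.lapply x ∘ₗ s, m), rfl⟩
  -- Nakayama: `M = T • M` for the trace ideal `T`, so some `r ≡ 1 mod T` kills `M`.
  obtain ⟨r, hr1, hr0⟩ :=
    Submodule.exists_sub_one_mem_and_smul_eq_zero_of_fg_of_le_smul T ⊤ Module.Finite.fg_top hT
  have hr : r = 0 := FaithfulSMul.eq_of_smul_eq_smul fun m : M => by
    rw [hr0 m trivial, zero_smul]
  rw [hr, zero_sub] at hr1
  exact (Ideal.eq_top_iff_one T).2 (by simpa using T.neg_mem hr1)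

theorem exists_linearMap_apply_one_eq_one (R A : Type*) [CommRing R] [Ring A] [Algebra R A]
    [Module.Finite R A] [Module.Projective R A] [FaithfulSMul R A] :
    ∃ t : A →ₗ[R] R, t 1 = 1 := by
  have hle : Submodule.span R (Set.range fun p : Module.Dual R A × A => p.1 p.2) ≤
      LinearMap.range (LinearMap.applyₗ (R := R) (M₂ := R) (1 : A)) := by
    refine Submodule.span_le.2 ?_
    rintro _ ⟨⟨f, a⟩, rfl⟩
    exact ⟨f ∘ₗ LinearMap.mulRight R a, by simp⟩
  rw [Module.span_range_dual_apply_eq_top] at hle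
  exact hle Submodule.mem_top

section Separable

variable {R A : Type*} [CommRing R] [Ring A] [Algebra R A]

structure IsSeparabilityIdempotent (e : A ⊗[R] Aᵐᵒᵖ) : Prop where
  tmul_one_mul (a : A) : (a ⊗ₜ 1) * e = (1 ⊗ₜ op a) * e
  mulLeftRight_apply_one : AlgHom.mulLeftRight R A e 1 = 1

variable (R A) in
theorem IsAzumaya.exists_isSeparabilityIdempotent [IsAzumaya R A] :
    ∃ e : A ⊗[R] Aᵐᵒᵖ, IsSeparabilityIdempotent e := by
  obtain ⟨t, ht⟩ := exists_linearMap_apply_one_eq_one R A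
  obtain ⟨e, he⟩ := (AlgHom.mulLeftRight_bij R A).surjective (Algebra.linearMap R A ∘ₗ t)
  refine ⟨e, fun a => (AlgHom.mulLeftRight_bij R A).injective ?_, by simp [he, ht]⟩
  ext x
  simp [he, Algebra.commutes]

variable {e : A ⊗[R] Aᵐᵒᵖ}

section Averaging

variable {M N : Type*} [AddCommMonoid M] [Module R M] [Module Aᵐᵒᵖ M] [IsScalarTower R Aᵐᵒᵖ M]
  [AddCommMonoid N] [Module R N] [Module Aᵐᵒᵖ N] [IsScalarTower R Aᵐᵒᵖ N]

def averagingPairing (f : M →ₗ[R] N) (m : M) : A →ₗ[R] Aᵐᵒᵖ →ₗ[R] N :=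
  LinearMap.mk₂ R (fun x w => w • f (op x • m))
    (fun x x' w => by simp [add_smul])
    (fun r x w => by simp [smul_comm w r])
    (fun x w w' => by simp [add_smul])
    (fun r x w => by simp [smul_assoc])

theorem lift_averagingPairing_tmul_one_mul (f : M →ₗ[R] N) (m : M) (a : A) (t : A ⊗[R] Aᵐᵒᵖ) :
    lift (averagingPairing f m) ((a ⊗ₜ 1) * t) = lift (averagingPairing f (op a • m)) t := by
  induction t using TensorProduct.induction_on with
  | zero => simp
  | tmul x w => simp [averagingPairing, mul_smul]
  | add t t' ht ht' => simp [mul_add, ht, ht']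

theorem lift_averagingPairing_one_tmul_mul (f : M →ₗ[R] N) (m : M) (a : A) (t : A ⊗[R] Aᵐᵒᵖ) :
    lift (averagingPairing f m) ((1 ⊗ₜ op a) * t) = op a • lift (averagingPairing f m) t := by
  induction t using TensorProduct.induction_on with
  | zero => simp
  | tmul x w => simp [averagingPairing, mul_smul]
  | add t t' ht ht' => simp [mul_add, ht, ht']

def IsSeparabilityIdempotent.average (he : IsSeparabilityIdempotent e) (f : M →ₗ[R] N) :
    M →ₗ[Aᵐᵒᵖ] N where
  toFun m := lift (averagingPairing f m) e
  map_add' m m' := by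
    clear he
    induction e using TensorProduct.induction_on with
    | zero => simp
    | tmul x w => simp [averagingPairing]
    | add t t' ht ht' => simp only [map_add, ht, ht']; abel
  map_smul' c m := by
    rw [RingHom.id_apply, ← op_unop c, ← lift_averagingPairing_tmul_one_mul, he.tmul_one_mul,
      lift_averagingPairing_one_tmul_mul]

theorem IsSeparabilityIdempotent.average_apply (he : IsSeparabilityIdempotent e)
    (f : M →ₗ[R] N) (m : M) : he.average f m = lift (averagingPairing f m) e := rfl

theorem lift_averagingPairing_of_leftInverse {f : M →ₗ[R] N} {g : N →ₗ[Aᵐᵒᵖ] M}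
    (hgf : ∀ m, g (f m) = m) (m : M) (t : A ⊗[R] Aᵐᵒᵖ) :
    g (lift (averagingPairing f m) t) = op (AlgHom.mulLeftRight R A t 1) • m := by
  induction t using TensorProduct.induction_on with
  | zero => simp
  | tmul x w => simp [averagingPairing, hgf, mul_smul]
  | add t t' ht ht' => simp [ht, ht', add_smul]

theorem IsSeparabilityIdempotent.average_leftInverse (he : IsSeparabilityIdempotent e)
    {f : M →ₗ[R] N} {g : N →ₗ[Aᵐᵒᵖ] M} (hgf : ∀ m, g (f m) = m) (m : M) :
    g (he.average f m) = m := by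
  rw [he.average_apply, lift_averagingPairing_of_leftInverse hgf, he.mulLeftRight_apply_one,
    op_one, one_smul]

end Averaging

theorem IsSeparabilityIdempotent.projective (he : IsSeparabilityIdempotent e)
    (M : Type*) [AddCommGroup M] [Module R M] [Module Aᵐᵒᵖ M] [IsScalarTower R Aᵐᵒᵖ M]
    [Module.Projective R M] : Module.Projective Aᵐᵒᵖ M := by
  let π := Finsupp.linearCombination Aᵐᵒᵖ (id : M → M)
  obtain ⟨f, hf⟩ := Module.projective_lifting_property (π.restrictScalars R) LinearMap.id
    (Finsupp.linearCombination_surjective _ Function.surjective_id)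
  exact Module.projective_def.2
    ⟨he.average f, he.average_leftInverse (g := π) fun m => LinearMap.congr_fun hf m⟩

end Separable

theorem exists_idempotent_generator_of_projective_quotient {A : Type*} [Ring A]
    (I : Submodule Aᵐᵒᵖ A) [Module.Projective Aᵐᵒᵖ (A ⧸ I)] :
    ∃ e ∈ I, e * e = e ∧ ∀ x : A, x ∈ I ↔ ∃ a : A, x = e * a := by
  have mem_iff (x : A) : x ∈ I ↔ I.mkQ x = 0 := by rw [← LinearMap.mem_ker, Submodule.ker_mkQ]
  obtain ⟨σ, hσ⟩ := I.mkQ.exists_rightInverse_of_surjective I.range_mkQ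
  have hσ_mkQ (x : A) : σ (I.mkQ x) = σ (I.mkQ 1) * x := by
    rw [← op_smul_eq_mul, ← map_smul, ← map_smul, op_smul_eq_mul, one_mul]
  set e := 1 - σ (I.mkQ 1)
  have he_mul (x : A) : e * x = x - σ (I.mkQ x) := by rw [sub_mul, one_mul, hσ_mkQ x]
  have he_mem : e ∈ I := by
    rw [mem_iff, map_sub, ← LinearMap.comp_apply I.mkQ σ, hσ, LinearMap.id_apply, sub_self]
  have he_mul_mem (x : A) (hx : x ∈ I) : e * x = x := by
    rw [he_mul, (mem_iff x).1 hx, map_zero, sub_zero]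
  refine ⟨e, he_mem, he_mul_mem e he_mem, fun x => ⟨fun hx => ⟨x, (he_mul_mem x hx).symm⟩, ?_⟩⟩
  rintro ⟨a, rfl⟩
  exact I.smul_mem (op a) he_mem

theorem stmt_0_general (R A : Type*) [CommRing R] [Ring A] [Algebra R A]
    (hAz : IsAzumayaAlgebra R A) (I : Submodule Aᵐᵒᵖ A)
    (hproj : Module.Projective R (A ⧸ I.restrictScalars R)) :
    ∃ e ∈ I, e * e = e ∧ ∀ x : A, x ∈ I ↔ ∃ a : A, x = e * a := by
  have := hAz.isAzumaya
  obtain ⟨e, he⟩ := IsAzumaya.exists_isSeparabilityIdempotent R A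
  have : Module.Projective R (A ⧸ I) := .of_equiv' (Submodule.Quotient.restrictScalarsEquiv R I)
  have := he.projective (A ⧸ I)
  exact exists_idempotent_generator_of_projective_quotient I

/-- Let `A` be an Azumaya algebra over a commutative Noetherian ring `R`, and `I`
a right ideal of `A` such that `A/I` is a projective `R`-module.  Then there is an
idempotent `e ∈ I` with `I = eA`. -/
theorem stmt_0 (R A : Type*) [CommRing R] [IsNoetherianRing R] [Ring A] [Algebra R A]
    (hAz : IsAzumayaAlgebra R A) (I : Submodule Aᵐᵒᵖ A)
    (hproj : Module.Projective R (A ⧸ I.restrictScalars R)) :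
    ∃ e ∈ I, e * e = e ∧ ∀ x : A, x ∈ I ↔ ∃ a : A, x = e * a :=
  stmt_0_general R A hAz I hproj
end

section
/- Let D be a division ring, V a finite-dimensional right D-vector space, and A = End_D(V) the ring of right-D-linear endomorphisms. Then every right ideal I of A equals Hom_D(V, W) = {f ∈ A : im(f) ⊆ W}, where W is the D-subspace spanned by ⋃_{f∈I} im(f), i.e. by the images of elements of I. -/
/-- Let `D` be a division ring, `V` a finite-dimensional right `D`-vector space
(i.e. a `Dᵐᵒᵖ`-module), and `A = End_D(V)`.  Every right ideal `I` of `A` equals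
`Hom_D(V, W) = {f : im f ⊆ W}` where `W = ⨆_{f ∈ I} im f`. -/
theorem stmt_2 (D V : Type*) [DivisionRing D] [AddCommGroup V] [Module Dᵐᵒᵖ V]
    [FiniteDimensional Dᵐᵒᵖ V]
    (I : Submodule (Module.End Dᵐᵒᵖ V)ᵐᵒᵖ (Module.End Dᵐᵒᵖ V)) :
    ∀ g : Module.End Dᵐᵒᵖ V,
      g ∈ I ↔ LinearMap.range g ≤ ⨆ f ∈ I, LinearMap.range (f : Module.End Dᵐᵒᵖ V) := by
  classical
  intro g
  constructor
  · intro hg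
    exact le_iSup₂ (f := fun f _ => LinearMap.range (f : Module.End Dᵐᵒᵖ V)) g hg
  · intro hg
    set W : Submodule Dᵐᵒᵖ V := ⨆ f ∈ I, LinearMap.range (f : Module.End Dᵐᵒᵖ V) with hW
    have hWfg : W.FG := IsNoetherian.noetherian W
    have hWcomp := (Submodule.fg_iff_compact W).mp hWfg
    rw [CompleteLattice.isCompactElement_iff_exists_le_iSup_of_le_iSup] at hWcomp
    have hWle : W ≤ ⨆ f : I, LinearMap.range (f : Module.End Dᵐᵒᵖ V) := by
      rw [hW, iSup_subtype]
    obtain ⟨t, ht⟩ := hWcomp I (fun f => LinearMap.range (f : Module.End Dᵐᵒᵖ V)) hWle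
    -- Φ : (t → V) →ₗ V
    let Φ : (↥t → V) →ₗ[Dᵐᵒᵖ] V :=
      LinearMap.lsum Dᵐᵒᵖ (fun _ : t => V) ℕ (fun f => (f : Module.End Dᵐᵒᵖ V))
    have hΦrange : LinearMap.range g ≤ LinearMap.range Φ := by
      refine hg.trans (ht.trans ?_)
      rw [Finset.sup_eq_iSup]
      refine iSup₂_le fun i hi => ?_
      rintro v ⟨u, rfl⟩
      refine ⟨Pi.single (⟨i, hi⟩ : t) u, ?_⟩
      have : Φ (Pi.single ⟨i, hi⟩ u) = ∑ x : {x // x ∈ t}, (x : Module.End Dᵐᵒᵖ V) ((Pi.single (⟨i, hi⟩ : {x // x ∈ t}) u : {x // x ∈ t} → V) x) := by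
        simp [Φ, LinearMap.lsum_apply]
      rw [this, Finset.sum_eq_single (⟨i, hi⟩ : {x // x ∈ t})]
      · simp
      · intro b _ hb
        simp [Pi.single_eq_of_ne hb]
      · simp
    obtain ⟨h, hh⟩ := Module.projective_lifting_property Φ.rangeRestrict
      (g.codRestrict (LinearMap.range Φ) (fun v => hΦrange ⟨v, rfl⟩))
      Φ.surjective_rangeRestrict
    have hgeq : g = Φ ∘ₗ h := by
      ext v
      simpa [Subtype.ext_iff] using congrArg Subtype.val (LinearMap.congr_fun hh v).symm
    have : g = ∑ i : t, ((i : Module.End Dᵐᵒᵖ V) ∘ₗ (LinearMap.proj i ∘ₗ h)) := by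
      rw [hgeq]; ext v; simp [Φ, LinearMap.lsum_apply]
    rw [this]
    refine Submodule.sum_mem I fun i _ => ?_
    have : ((i : Module.End Dᵐᵒᵖ V) ∘ₗ (LinearMap.proj i ∘ₗ h))
        = MulOpposite.op ((LinearMap.proj i ∘ₗ h : Module.End Dᵐᵒᵖ V)) • ((i : I) : Module.End Dᵐᵒᵖ V) := by
      rfl
    rw [this]
    exact I.smul_mem _ (i : I).2
end

section
/- Let p be a prime and let n, m be powers of p. Then the multinomial coefficient (nm)! / ((n!)^m · m!) is not divisible by p. -/
/-!
Iterating `v_p((p k)!) = v_p(k!) + k` gives `v_p((p^a k)!) = v_p(k!) + k v_p((p^a)!)` for every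
`k`. Taking `k = m`, the valuations of the two sides of `B (p^a)!^m m! = (p^a m)!`, where `B` is
the quotient in question, force `v_p(B) = 0`.
-/

open Nat

namespace Nat

theorem uniformBell_ne_zero (m n : ℕ) : uniformBell m n ≠ 0 := by
  simp only [uniformBell_eq, ne_eq, Finset.prod_eq_zero_iff, Finset.mem_range,
    choose_eq_zero_iff, not_exists, not_and, not_lt]
  intro k _
  omega

variable {p : ℕ} [Fact p.Prime]

theorem padicValNat_factorial_prime_pow_mul (a k : ℕ) :
    padicValNat p (p ^ a * k)! = padicValNat p k ! + k * padicValNat p (p ^ a)! := by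
  induction a with
  | zero => simp
  | succ a ih =>
    rw [pow_succ', mul_assoc, padicValNat_factorial_mul, padicValNat_factorial_mul, ih]
    ring

theorem padicValNat_uniformBell_prime_pow (m a : ℕ) :
    padicValNat p (uniformBell m (p ^ a)) = 0 := by
  have hpa : p ^ a ≠ 0 := pow_ne_zero a (Fact.out : p.Prime).ne_zero
  have hval := congrArg (padicValNat p) (uniformBell_mul_eq m hpa)
  have hfac : (p ^ a)! ^ m ≠ 0 := pow_ne_zero m (factorial_ne_zero _)
  rw [padicValNat.mul (mul_ne_zero (uniformBell_ne_zero m _) hfac) (factorial_ne_zero m),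
    padicValNat.mul (uniformBell_ne_zero m _) hfac, padicValNat.pow, mul_comm m (p ^ a),
    padicValNat_factorial_prime_pow_mul] at hval
  omega

theorem not_prime_dvd_uniformBell_prime_pow (m a : ℕ) : ¬ p ∣ uniformBell m (p ^ a) := by
  rw [dvd_iff_padicValNat_ne_zero (uniformBell_ne_zero m _), not_not]
  exact padicValNat_uniformBell_prime_pow m a

end Nat

theorem stmt_5_general (p a n m : ℕ) (hp : p.Prime) (hn : n = p ^ a) :
    ¬ p ∣ Nat.factorial (n * m) / (Nat.factorial n ^ m * Nat.factorial m) := by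
  have : Fact p.Prime := ⟨hp⟩
  subst hn
  rw [mul_comm, ← uniformBell_eq_div m (pow_ne_zero a hp.ne_zero)]
  exact not_prime_dvd_uniformBell_prime_pow m a

/-- Let `p` be a prime and `n, m` powers of `p`.  Then the multinomial coefficient
`(nm)! / ((n!)^m * m!)` is not divisible by `p`. -/
theorem stmt_5 (p a b n m : ℕ) (hp : p.Prime) (hn : n = p ^ a) (hm : m = p ^ b) :
    ¬ p ∣ Nat.factorial (n * m) / (Nat.factorial n ^ m * Nat.factorial m) :=
  stmt_5_general p a n m hp hn
end

section
/- Let A be a central simple algebra over a field F with an involution σ of the first kind, and let I be a right ideal of A that is regular with respect to σ (i.e., A = I ⊕ I^⊥ where I^⊥ = {a ∈ A : σ(I)·a = 0}). Write I = eA with 1 = e + f, e ∈ I, f ∈ I^⊥. Then σ(e) = e. -/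
/-! Since `σ e` kills `f`, we get `σ e = σ e * (e + f) = σ e * e`, and `σ e * e` is fixed by the
anti-multiplicative involution `σ`. -/

theorem mul_eq_self_of_mul_eq_zero_of_add_eq_one {A : Type*} [NonAssocSemiring A] {a e f : A}
    (ha : a * f = 0) (hef : e + f = 1) : a * e = a := by
  rw [← add_zero (a * e), ← ha, ← mul_add, hef, mul_one]

theorem apply_eq_self_of_apply_mul_self_eq {A : Type*} [Mul A] {σ : A → A}
    (hmul : ∀ x y, σ (x * y) = σ y * σ x) (hinv : ∀ x, σ (σ x) = x) {x : A}
    (hx : σ x * x = σ x) : σ x = x :=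
  calc σ x = σ x * x := hx.symm
    _ = σ (σ x * x) := by rw [hmul, hinv]
    _ = x := by rw [hx, hinv]

theorem stmt_8_general (A : Type*) [Ring A]
    (σ : A → A)
    (hmul : ∀ x y, σ (x * y) = σ y * σ x)
    (hinv : ∀ x, σ (σ x) = x)
    (I : Submodule Aᵐᵒᵖ A)
    -- I^⊥ is the right annihilator of σ(I)
    (perp : Set A) (hperp : perp = {a : A | ∀ x ∈ I, σ x * a = 0})
    (e f : A) (he : e ∈ I) (hf : f ∈ perp) (hef : e + f = 1) :
    σ e = e := by
  subst hperp
  exact apply_eq_self_of_apply_mul_self_eq hmul hinv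
    (mul_eq_self_of_mul_eq_zero_of_add_eq_one (hf e he) hef)

/-- Let `A` be a central simple algebra over a field `F` with an involution `σ` of
the first kind, and `I` a right ideal that is regular with respect to `σ`
(`A = I ⊕ I^⊥` where `I^⊥ = {a : σ(I)·a = 0}`).  Writing `1 = e + f` with `e ∈ I`,
`f ∈ I^⊥`, we have `σ(e) = e`. -/
theorem stmt_8 (F A : Type*) [Field F] [Ring A] [Algebra F A] [FiniteDimensional F A]
    [Algebra.IsCentral F A] [IsSimpleRing A]
    (σ : A → A)
    (hadd : ∀ x y, σ (x + y) = σ x + σ y)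
    (hmul : ∀ x y, σ (x * y) = σ y * σ x)
    (hinv : ∀ x, σ (σ x) = x)
    (hlin : ∀ (c : F) (x : A), σ (c • x) = c • σ x)
    (I : Submodule Aᵐᵒᵖ A)
    -- I^⊥ is the right annihilator of σ(I)
    (perp : Set A) (hperp : perp = {a : A | ∀ x ∈ I, σ x * a = 0})
    -- A = I ⊕ I^⊥ :
    (hspan : ∀ a : A, ∃ x ∈ I, ∃ y ∈ perp, a = x + y)
    (hindep : ∀ x : A, x ∈ I → x ∈ perp → x = 0)
    (e f : A) (he : e ∈ I) (hf : f ∈ perp) (hef : e + f = 1) :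
    σ e = e :=
  stmt_8_general A σ hmul hinv I perp hperp e f he hf hef
end

section
/- Let A be a ring with involution σ, L ⊆ A a commutative subring, and u ∈ A a unit such that u·l·u^{-1} = σ(l) for all l ∈ L. Set v = u + σ(u). Then v·l = σ(l)·v for all l ∈ L; consequently, if v is invertible, the involution τ = inn_{v^{-1}} ∘ σ fixes L pointwise. -/
/-!
Conjugation by `u` acting as `σ` on `L` means `u l = σ(l) u`. Applying the anti-multiplicative
involution `σ` to this gives `σ(u) l = σ(l) σ(u)`, and adding the two relations gives
`v l = σ(l) v` for `v = u + σ(u)`. When `v` is a unit this says exactly `v⁻¹ σ(l) v = l`.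
-/

section AntiInvolution

variable {A : Type*} [Ring A] {σ : A → A}

theorem apply_mul_eq_of_mul_eq (hmul : ∀ x y, σ (x * y) = σ y * σ x) (hinv : ∀ x, σ (σ x) = x)
    {a l : A} (h : a * l = σ l * a) : σ a * l = σ l * σ a := by
  simpa only [hmul, hinv, eq_comm] using congrArg σ h

theorem add_apply_mul_eq_of_mul_eq (hmul : ∀ x y, σ (x * y) = σ y * σ x)
    (hinv : ∀ x, σ (σ x) = x) {a l : A} (h : a * l = σ l * a) :
    (a + σ a) * l = σ l * (a + σ a) := by
  rw [add_mul, mul_add, h, apply_mul_eq_of_mul_eq hmul hinv h]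

end AntiInvolution

theorem stmt_18_general (A : Type*) [Ring A] (σ : A → A)
    (hmul : ∀ x y, σ (x * y) = σ y * σ x)
    (hinv : ∀ x, σ (σ x) = x)
    (L : Subring A)
    (u : Aˣ) (hu : ∀ l ∈ L, ↑u * l * ↑u⁻¹ = σ l)
    (v : A) (hv : v = ↑u + σ ↑u) :
    (∀ l ∈ L, v * l = σ l * v) ∧
    (∀ w : Aˣ, (w : A) = v → ∀ l ∈ L, ↑w⁻¹ * σ l * ↑w = l) := by
  have hvl : ∀ l ∈ L, v * l = σ l * v := fun l hl =>
    hv ▸ add_apply_mul_eq_of_mul_eq hmul hinv ((Units.mul_inv_eq_iff_eq_mul _).1 (hu l hl))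
  refine ⟨hvl, fun w hw l hl => ?_⟩
  rw [mul_assoc, Units.inv_mul_eq_iff_eq_mul, hw, hvl l hl]

/-- Let `A` be a ring with involution `σ`, `L ⊆ A` a commutative subring, and `u` a
unit with `u·l·u⁻¹ = σ(l)` for all `l ∈ L`.  Set `v = u + σ(u)`.  Then
`v·l = σ(l)·v` for all `l ∈ L`; consequently, if `v` is invertible then the
involution `τ = inn_{v⁻¹} ∘ σ` fixes `L` pointwise. -/
theorem stmt_18 (A : Type*) [Ring A] (σ : A → A)
    (hadd : ∀ x y, σ (x + y) = σ x + σ y)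
    (hmul : ∀ x y, σ (x * y) = σ y * σ x)
    (hinv : ∀ x, σ (σ x) = x)
    (L : Subring A) (hcomm : ∀ x ∈ L, ∀ y ∈ L, x * y = y * x)
    (u : Aˣ) (hu : ∀ l ∈ L, ↑u * l * ↑u⁻¹ = σ l)
    (v : A) (hv : v = ↑u + σ ↑u) :
    (∀ l ∈ L, v * l = σ l * v) ∧
    (∀ w : Aˣ, (w : A) = v → ∀ l ∈ L, ↑w⁻¹ * σ l * ↑w = l) :=
  stmt_18_general A σ hmul hinv L u hu v hv
end
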